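/- arXiv:2410.10095 — 3 statements merged into one kernel-verified Lean document; each statement's English description precedes it below -/
import Mathlib

section
/- The non-resolute rule that outputs the set of all committees satisfying proportionality for solid coalitions (PSC) is candidate monotone: if a committee W satisfies PSC and c ∈ W, then in any instance obtained by shifting c one rank up in one voter's preference list, there exists a committee W' containing c that satisfies PSC. -/
/-- `R i c` is the rank (0 = top) that voter `i` assigns to candidate `c`. -/
abbrev Profile (n m : ℕ) := Fin n → Fin m → Fin m

/-- `N'` forms a solid coalition over `C'`: every voter in `N'` ranks every
candidate of `C'` above every candidate outside `C'`. -/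
def SolidCoalition {n m : ℕ} (R : Profile n m)
    (N' : Finset (Fin n)) (C' : Finset (Fin m)) : Prop :=
  ∀ i ∈ N', ∀ c ∈ C', ∀ c' ∉ C', (R i c : ℕ) < (R i c' : ℕ)

/-- A committee `W` satisfies proportionality for solid coalitions. -/
def SatisfiesPSC {n m : ℕ} (k : ℕ) (R : Profile n m) (W : Finset (Fin m)) : Prop :=
  ¬ ∃ (N' : Finset (Fin n)) (C' : Finset (Fin m)) (ℓ : ℕ),
      1 ≤ ℓ ∧ ℓ ≤ k ∧ SolidCoalition R N' C' ∧
      (ℓ : ℚ) * n / k ≤ (N'.card : ℚ) ∧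
      (W ∩ C').card < min C'.card ℓ

/-- `R'` is obtained from `R` by shifting candidate `c` one rank up in
voter `i`'s list, i.e. swapping `c` with its immediate predecessor `d`. -/
def ShiftUp {n m : ℕ} (R R' : Profile n m) (i : Fin n) (c : Fin m) : Prop :=
  (∀ j, j ≠ i → R' j = R j) ∧
  ∃ d : Fin m, (R i d : ℕ) + 1 = (R i c : ℕ) ∧
    R' i c = R i d ∧ R' i d = R i c ∧
    ∀ e, e ≠ c → e ≠ d → R' i e = R i e

private lemma card_val_lt {m : ℕ} (t : ℕ) (ht : t ≤ m) :
    ((Finset.univ : Finset (Fin m)).filter (fun (u : Fin m) => (u : ℕ) < t)).card = t := by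
  have h : ((Finset.univ : Finset (Fin m)).filter (fun (u : Fin m) => (u : ℕ) < t)).card
      = (Finset.range t).card := by
    apply Finset.card_bij (fun (u : Fin m) _ => (u : ℕ))
    · intro a ha
      simpa using (Finset.mem_filter.mp ha).2
    · intro a _ b _ h
      exact Fin.val_injective h
    · intro b hb
      exact ⟨⟨b, lt_of_lt_of_le (Finset.mem_range.mp hb) ht⟩,
        by simpa using Finset.mem_range.mp hb, rfl⟩
  simpa using h

private lemma card_rank_lt {m : ℕ} (f : Fin m → Fin m) (hf : Function.Bijective f)
    (t : ℕ) (ht : t ≤ m) :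
    ((Finset.univ : Finset (Fin m)).filter (fun (v : Fin m) => (f v : ℕ) < t)).card = t := by
  have h : ((Finset.univ : Finset (Fin m)).filter (fun (v : Fin m) => (f v : ℕ) < t)).card
      = ((Finset.univ : Finset (Fin m)).filter (fun (u : Fin m) => (u : ℕ) < t)).card := by
    apply Finset.card_bij (fun (v : Fin m) _ => f v)
    · intro a ha
      simp only [Finset.mem_filter, Finset.mem_univ, true_and] at ha ⊢
      exact ha
    · intro a _ b _ h
      exact hf.1 h
    · intro b hb
      obtain ⟨a, rfl⟩ := hf.2 b
      exact ⟨a, by simpa using hb, rfl⟩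
  rw [h, card_val_lt t ht]

private lemma exists_maximal_above {α : Type*} [DecidableEq α]
    (F : Finset (Finset α)) {C : Finset α} (hC : C ∈ F) :
    ∃ D ∈ F, C ⊆ D ∧ ∀ E ∈ F, D ⊆ E → D = E := by
  obtain ⟨D, hD, hmax⟩ := (F.filter (fun D => C ⊆ D)).exists_max_image Finset.card
    ⟨C, by simp [hC]⟩
  rw [Finset.mem_filter] at hD
  refine ⟨D, hD.1, hD.2, fun E hE hDE => ?_⟩
  have hE' : E ∈ F.filter (fun D => C ⊆ D) :=
    Finset.mem_filter.mpr ⟨hE, hD.2.trans hDE⟩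
  exact Finset.eq_of_subset_of_card_le hDE (hmax E hE')

private lemma quota_nat {n k : ℕ} (hk : 0 < k) {l cN : ℕ}
    (h : (l : ℚ) * n / k ≤ (cN : ℚ)) : l * n ≤ k * cN := by
  rw [div_le_iff₀ (by exact_mod_cast hk)] at h
  have h2 : ((l * n : ℕ) : ℚ) ≤ ((k * cN : ℕ) : ℚ) := by push_cast; linarith
  exact_mod_cast h2

private lemma solid_nested {m : ℕ} (f : Fin m → Fin m) {C D : Finset (Fin m)}
    (hC : ∀ x ∈ C, ∀ y, y ∉ C → (f x : ℕ) < (f y : ℕ))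
    (hD : ∀ x ∈ D, ∀ y, y ∉ D → (f x : ℕ) < (f y : ℕ)) : C ⊆ D ∨ D ⊆ C := by
  by_contra hcon
  push_neg at hcon
  obtain ⟨x, hxC, hxD⟩ := Finset.not_subset.mp hcon.1
  obtain ⟨y, hyD, hyC⟩ := Finset.not_subset.mp hcon.2
  have h1 := hC x hxC y hyC
  have h2 := hD y hyD x hxD
  omega

private def NS {n m : ℕ} (Q : Profile n m) (C : Finset (Fin m)) : Finset (Fin n) :=
  Finset.univ.filter (fun j => ∀ x ∈ C, ∀ y, y ∉ C → (Q j x : ℕ) < (Q j y : ℕ))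

private lemma mem_NS {n m : ℕ} {Q : Profile n m} {C : Finset (Fin m)} {j : Fin n} :
    j ∈ NS Q C ↔ ∀ x ∈ C, ∀ y, y ∉ C → (Q j x : ℕ) < (Q j y : ℕ) := by
  simp [NS]

private lemma exists_unblocked {n m k : ℕ} (hn : 0 < n) (hk : 0 < k)
    (Q : Profile n m) (Cs : Finset (Fin m)) (X : Finset (Fin m)) (hX : X.card = k)
    (a : Fin m) (ha : a ∈ Cs)
    (N₀ : Finset (Fin n)) (ℓ₀ : ℕ) (hsol₀ : SolidCoalition Q N₀ Cs)
    (hq₀ : ℓ₀ * n ≤ k * N₀.card) (hviol : (X ∩ Cs).card + 1 ≤ min Cs.card ℓ₀) :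
    ∃ w ∈ X, w ∉ Cs ∧ ∀ N' C' ℓ, 1 ≤ ℓ → ℓ ≤ k → SolidCoalition Q N' C' →
      ℓ * n ≤ k * N'.card → w ∈ C' → a ∉ C' → min C'.card ℓ + 1 ≤ (X ∩ C').card := by
  by_contra hcon
  push_neg at hcon
  have hch : ∀ w : {w : Fin m // w ∈ X \ Cs}, ∃ C' : Finset (Fin m),
      (w : Fin m) ∈ C' ∧ a ∉ C' ∧ n * (X ∩ C').card ≤ k * (NS Q C').card := by
    rintro ⟨w, hw⟩
    rw [Finset.mem_sdiff] at hw
    obtain ⟨N', C', ℓ, hl1, hl2, hsol, hq, hwC, haC, hcard⟩ := hcon w hw.1 hw.2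
    refine ⟨C', hwC, haC, ?_⟩
    have hsub : N' ⊆ NS Q C' := fun j hj => mem_NS.mpr (hsol j hj)
    have hm := Nat.min_le_right C'.card ℓ
    have h1 : (X ∩ C').card ≤ ℓ := by omega
    calc n * (X ∩ C').card ≤ n * ℓ := Nat.mul_le_mul_left n h1
      _ = ℓ * n := Nat.mul_comm n ℓ
      _ ≤ k * N'.card := hq
      _ ≤ k * (NS Q C').card := Nat.mul_le_mul_left k (Finset.card_le_card hsub)
  choose g hg1 hg2 hg3 using hch
  classical
  set F : Finset (Finset (Fin m)) := (X \ Cs).attach.image g with hF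
  have hFspec : ∀ C ∈ F, (∃ w ∈ C, w ∉ Cs) ∧ a ∉ C ∧
      n * (X ∩ C).card ≤ k * (NS Q C).card := by
    intro C hC
    obtain ⟨w, _, rfl⟩ := Finset.mem_image.mp hC
    have hw := Finset.mem_sdiff.mp w.2
    exact ⟨⟨w, hg1 w, hw.2⟩, hg2 w, hg3 w⟩
  set M : Finset (Finset (Fin m)) := F.filter (fun C => ∀ D ∈ F, C ⊆ D → C = D) with hM
  have hcov : X \ Cs ⊆ M.biUnion (fun C => X ∩ C) := by
    intro w hw
    have hmem : g ⟨w, hw⟩ ∈ F := Finset.mem_image_of_mem g (Finset.mem_attach _ _)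
    obtain ⟨D, hDF, hsubD, hmaxD⟩ := exists_maximal_above F hmem
    have hDM : D ∈ M := Finset.mem_filter.mpr ⟨hDF, fun E hE hDE => hmaxD E hE hDE⟩
    exact Finset.mem_biUnion.mpr ⟨D, hDM,
      Finset.mem_inter.mpr ⟨(Finset.mem_sdiff.mp hw).1, hsubD (hg1 ⟨w, hw⟩)⟩⟩
  have c1 : (X \ Cs).card ≤ ∑ C ∈ M, (X ∩ C).card :=
    (Finset.card_le_card hcov).trans Finset.card_biUnion_le
  have c2 : ∑ C ∈ M, n * (X ∩ C).card ≤ ∑ C ∈ M, k * (NS Q C).card :=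
    Finset.sum_le_sum fun C hC => (hFspec C (Finset.filter_subset _ _ hC)).2.2
  have hCsM : Cs ∉ M := fun h => (hFspec Cs (Finset.filter_subset _ _ h)).2.1 ha
  have hdj : ∀ C ∈ insert Cs M, ∀ D ∈ insert Cs M, C ≠ D →
      Disjoint (NS Q C) (NS Q D) := by
    intro C hC D hD hne
    rw [Finset.disjoint_left]
    intro j hjC hjD
    have hnest := solid_nested (Q j) (mem_NS.mp hjC) (mem_NS.mp hjD)
    have key : ∀ E ∈ M, ∀ E' ∈ insert Cs M, E ⊆ E' → E ≠ E' → False := by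
      intro E hE E' hE' hsub hneq
      rcases Finset.mem_insert.mp hE' with rfl | hE'M
      · obtain ⟨⟨w, hwE, hwCs⟩, _, _⟩ := hFspec E (Finset.filter_subset _ _ hE)
        exact hwCs (hsub hwE)
      · exact hneq ((Finset.mem_filter.mp hE).2 E' (Finset.filter_subset _ _ hE'M) hsub)
    rcases Finset.mem_insert.mp hC with rfl | hCM <;>
      rcases Finset.mem_insert.mp hD with rfl | hDM
    · exact hne rfl
    · rcases hnest with h | h
      · exact (hFspec D (Finset.filter_subset _ _ hDM)).2.1 (h ha)
      · exact key D hDM C (Finset.mem_insert_self _ _) h (Ne.symm hne)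
    · rcases hnest with h | h
      · exact key C hCM D (Finset.mem_insert_self _ _) h hne
      · exact (hFspec C (Finset.filter_subset _ _ hCM)).2.1 (h ha)
    · rcases hnest with h | h
      · exact key C hCM D (Finset.mem_insert_of_mem hDM) h hne
      · exact key D hDM C (Finset.mem_insert_of_mem hCM) h (Ne.symm hne)
  have c3 : (NS Q Cs).card + ∑ C ∈ M, (NS Q C).card ≤ n := by
    have hbu : ((insert Cs M).biUnion (NS Q)).card = ∑ C ∈ insert Cs M, (NS Q C).card :=
      Finset.card_biUnion hdj
    rw [Finset.sum_insert hCsM] at hbu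
    calc (NS Q Cs).card + ∑ C ∈ M, (NS Q C).card
        = ((insert Cs M).biUnion (NS Q)).card := hbu.symm
      _ ≤ (Finset.univ : Finset (Fin n)).card := Finset.card_le_univ _
      _ = n := by simp
  have c4 : n * ((X ∩ Cs).card + 1) ≤ k * (NS Q Cs).card := by
    have hsub : N₀ ⊆ NS Q Cs := fun j hj => mem_NS.mpr (hsol₀ j hj)
    have hm := Nat.min_le_right Cs.card ℓ₀
    have h1 : (X ∩ Cs).card + 1 ≤ ℓ₀ := by omega
    calc n * ((X ∩ Cs).card + 1) ≤ n * ℓ₀ := Nat.mul_le_mul_left n h1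
      _ = ℓ₀ * n := Nat.mul_comm n ℓ₀
      _ ≤ k * N₀.card := hq₀
      _ ≤ k * (NS Q Cs).card := Nat.mul_le_mul_left k (Finset.card_le_card hsub)
  have c5 : (X ∩ Cs).card + (X \ Cs).card = k := by
    rw [Finset.card_inter_add_card_sdiff, hX]
  have e1 : n * (X \ Cs).card ≤ k * ∑ C ∈ M, (NS Q C).card := by
    calc n * (X \ Cs).card ≤ n * ∑ C ∈ M, (X ∩ C).card := Nat.mul_le_mul_left n c1
      _ = ∑ C ∈ M, n * (X ∩ C).card := Finset.mul_sum _ _ _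
      _ ≤ ∑ C ∈ M, k * (NS Q C).card := c2
      _ = k * ∑ C ∈ M, (NS Q C).card := (Finset.mul_sum _ _ _).symm
  have e3 : k * (NS Q Cs).card + k * ∑ C ∈ M, (NS Q C).card ≤ k * n := by
    rw [← Nat.mul_add]
    exact Nat.mul_le_mul_left k c3
  have hA : n * ((X ∩ Cs).card + 1) = n * (X ∩ Cs).card + n := by ring
  have h2 : n * (X ∩ Cs).card + n * (X \ Cs).card = n * k := by
    rw [← Nat.mul_add, c5]
  have hcomm : k * n = n * k := Nat.mul_comm k n
  have hfin := add_le_add c4 e1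
  rw [hA] at hfin
  set a1 := n * (X ∩ Cs).card
  set a2 := n * (X \ Cs).card
  set a3 := k * (NS Q Cs).card
  set a4 := k * ∑ C ∈ M, (NS Q C).card
  set a5 := n * k
  set a6 := k * n
  omega

private lemma repair {n m k : ℕ} (hn : 0 < n) (hk : 0 < k)
    (Q : Profile n m) (Cs : Finset (Fin m)) (c : Fin m) (hcCs : c ∈ Cs) :
    ∀ t X, (Cs \ X).card ≤ t → X.card = k → c ∈ X →
      (∀ N' C' ℓ, 1 ≤ ℓ → ℓ ≤ k → SolidCoalition Q N' C' →
        (ℓ : ℚ) * n / k ≤ (N'.card : ℚ) → (X ∩ C').card < min C'.card ℓ → C' = Cs) →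
      ∃ V : Finset (Fin m), V.card = k ∧ c ∈ V ∧ SatisfiesPSC k Q V := by
  intro t
  induction t with
  | zero =>
    intro X hle hX hcX H
    refine ⟨X, hX, hcX, ?_⟩
    rintro ⟨N', C', ℓ, h1, h2, hsol, hq, hviol⟩
    have hC : C' = Cs := H N' C' ℓ h1 h2 hsol hq hviol
    subst hC
    have hex : ∃ b ∈ C', b ∉ X := by
      by_contra hcc
      push_neg at hcc
      have heq : X ∩ C' = C' := Finset.inter_eq_right.mpr (fun b hbC => hcc b hbC)
      rw [heq] at hviol
      have := Nat.min_le_left C'.card ℓ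
      omega
    obtain ⟨b, hbC, hbX⟩ := hex
    have : 0 < (C' \ X).card :=
      Finset.card_pos.mpr ⟨b, Finset.mem_sdiff.mpr ⟨hbC, hbX⟩⟩
    omega
  | succ t ih =>
    intro X hle hX hcX H
    by_cases hP : SatisfiesPSC k Q X
    · exact ⟨X, hX, hcX, hP⟩
    rw [SatisfiesPSC, not_not] at hP
    obtain ⟨N₀, C₀, ℓ₀, h1, h2, hsol₀, hq₀, hviol₀⟩ := hP
    have hC : C₀ = Cs := H N₀ C₀ ℓ₀ h1 h2 hsol₀ hq₀ hviol₀
    subst hC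
    have hex : ∃ b ∈ C₀, b ∉ X := by
      by_contra hcc
      push_neg at hcc
      have heq : X ∩ C₀ = C₀ := Finset.inter_eq_right.mpr (fun b hbC => hcc b hbC)
      rw [heq] at hviol₀
      have := Nat.min_le_left C₀.card ℓ₀
      omega
    obtain ⟨a, haCs, haX⟩ := hex
    obtain ⟨w, hwX, hwCs, hunb⟩ := exists_unblocked hn hk Q C₀ X hX a haCs N₀ ℓ₀
      hsol₀ (quota_nat hk hq₀) (by omega)
    classical
    set X' := insert a (X.erase w) with hX'def
    have hcw : c ≠ w := fun h => hwCs (h ▸ hcCs)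
    have haw : a ∉ X.erase w := fun h => haX (Finset.mem_of_mem_erase h)
    have hXcard : X'.card = k := by
      rw [hX'def, Finset.card_insert_of_notMem haw, Finset.card_erase_of_mem hwX, hX]
      omega
    have hcX' : c ∈ X' := Finset.mem_insert_of_mem (Finset.mem_erase.mpr ⟨hcw, hcX⟩)
    have hmeas : (C₀ \ X').card ≤ t := by
      have hset : C₀ \ X' = (C₀ \ X).erase a := by
        ext e
        by_cases heC : e ∈ C₀
        · have hew : e ≠ w := fun h => hwCs (h ▸ heC)
          simp only [hX'def, Finset.mem_sdiff, Finset.mem_insert, Finset.mem_erase,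
            heC, true_and, hew, ne_eq, not_false_eq_true]
          tauto
        · simp [heC]
      rw [hset, Finset.card_erase_of_mem (Finset.mem_sdiff.mpr ⟨haCs, haX⟩)]
      omega
    have H' : ∀ N' C' ℓ, 1 ≤ ℓ → ℓ ≤ k → SolidCoalition Q N' C' →
        (ℓ : ℚ) * n / k ≤ (N'.card : ℚ) → (X' ∩ C').card < min C'.card ℓ → C' = C₀ := by
      intro N' C' ℓ hl1 hl2 hsol hq hviol
      by_contra hne
      have hXge : min C'.card ℓ ≤ (X ∩ C').card := by
        by_contra hlt
        exact hne (H N' C' ℓ hl1 hl2 hsol hq (by omega))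
      by_cases haC : a ∈ C'
      · have hXC' : X' ∩ C' = insert a ((X ∩ C').erase w) := by
          rw [hX'def, Finset.insert_inter_of_mem haC, Finset.erase_inter]
        have hins : a ∉ (X ∩ C').erase w :=
          fun h => haX (Finset.mem_inter.mp (Finset.mem_of_mem_erase h)).1
        have hge : (X ∩ C').card ≤ (X' ∩ C').card := by
          rw [hXC', Finset.card_insert_of_notMem hins]
          have := Finset.pred_card_le_card_erase (s := X ∩ C') (a := w)
          omega
        omega
      · have hXC' : X' ∩ C' = (X ∩ C').erase w := by
          rw [hX'def, Finset.insert_inter_of_notMem haC, Finset.erase_inter]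
        by_cases hwC : w ∈ C'
        · have hbig := hunb N' C' ℓ hl1 hl2 hsol (quota_nat hk hq) hwC haC
          have hcard : (X' ∩ C').card = (X ∩ C').card - 1 := by
            rw [hXC', Finset.card_erase_of_mem (Finset.mem_inter.mpr ⟨hwX, hwC⟩)]
          omega
        · have heq : X' ∩ C' = X ∩ C' := by
            rw [hXC', Finset.erase_eq_of_notMem
              (fun h => hwC (Finset.mem_inter.mp h).2)]
          rw [heq] at hviol
          omega
    exact ih X' hmeas hXcard hcX' H'

private lemma violation_set_eq {n m : ℕ} {R R' : Profile n m} {i : Fin n} {c d : Fin m}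
    (hR'i : Function.Bijective (R' i))
    (hoth : ∀ j, j ≠ i → R' j = R j)
    (hcd : (R i d : ℕ) + 1 = (R i c : ℕ))
    (h1 : R' i c = R i d) (h2 : R' i d = R i c)
    (h3 : ∀ e, e ≠ c → e ≠ d → R' i e = R i e)
    {N' : Finset (Fin n)} {C : Finset (Fin m)}
    (hsol : SolidCoalition R' N' C) (hnot : ¬ SolidCoalition R N' C) :
    C = Finset.univ.filter (fun e => (R' i e : ℕ) < (R i c : ℕ)) := by
  rw [SolidCoalition] at hnot
  push_neg at hnot
  obtain ⟨j, hj, x, hx, y, hy, hyx⟩ := hnot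
  have hji : j = i := by
    by_contra hne
    have hs := hsol j hj x hx y hy
    rw [hoth j hne] at hs
    omega
  subst hji
  have hvc : (R' j c : ℕ) + 1 = (R j c : ℕ) := by rw [h1]; exact hcd
  have hvd : (R' j d : ℕ) = (R j c : ℕ) := by rw [h2]
  have hv3 : ∀ e, e ≠ c → e ≠ d → (R' j e : ℕ) = (R j e : ℕ) := by
    intro e hec hed; rw [h3 e hec hed]
  have hinj : ∀ e1 e2 : Fin m, (R' j e1 : ℕ) = (R' j e2 : ℕ) → e1 = e2 :=
    fun e1 e2 h => hR'i.1 (Fin.val_injective h)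
  have hsx := hsol j hj x hx y hy
  have hkey : x = c ∧ y = d := by
    by_cases hxc : x = c
    · subst hxc
      by_cases hyd : y = d
      · exact ⟨rfl, hyd⟩
      · exfalso
        have hyc : y ≠ x := fun h => hy (h ▸ hx)
        have h3y := hv3 y hyc hyd
        have hne : (R' j y : ℕ) ≠ (R' j d : ℕ) := fun h => hyd (hinj _ _ h)
        omega
    · exfalso
      by_cases hxd : x = d
      · subst hxd
        by_cases hyc : y = c
        · subst hyc; omega
        · have hyd : y ≠ x := fun h => hy (h ▸ hx)
          have h3y := hv3 y hyc hyd
          omega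
      · have h3x := hv3 x hxc hxd
        by_cases hyc : y = c
        · subst hyc; omega
        · by_cases hyd : y = d
          · subst hyd
            have hne : (R' j x : ℕ) ≠ (R' j c : ℕ) := fun h => hxc (hinj _ _ h)
            omega
          · have h3y := hv3 y hyc hyd
            omega
  have hcC : c ∈ C := hkey.1 ▸ hx
  have hdC : d ∉ C := hkey.2 ▸ hy
  have hsubset : ∀ z ∈ C, (R' j z : ℕ) < C.card := by
    intro z hz
    have hss : (Finset.univ.filter (fun v => (R' j v : ℕ) < (R' j z : ℕ) + 1)) ⊆ C := by
      intro v hv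
      rw [Finset.mem_filter] at hv
      by_contra hvC
      have := hsol j hj z hz v hvC
      omega
    have hcount : (Finset.univ.filter
        (fun v => (R' j v : ℕ) < (R' j z : ℕ) + 1)).card = (R' j z : ℕ) + 1 :=
      card_rank_lt (R' j) hR'i _ (Nat.succ_le_of_lt (R' j z).isLt)
    have := Finset.card_le_card hss
    omega
  have hBcard : (Finset.univ.filter (fun v => (R' j v : ℕ) < C.card)).card = C.card :=
    card_rank_lt (R' j) hR'i _ (le_trans (Finset.card_le_univ C) (by simp))
  have hCeq : C = Finset.univ.filter (fun v => (R' j v : ℕ) < C.card) := by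
    apply Finset.eq_of_subset_of_card_le
    · intro z hz
      exact Finset.mem_filter.mpr ⟨Finset.mem_univ _, hsubset z hz⟩
    · exact hBcard.le
  have htr : C.card = (R j c : ℕ) := by
    have hc' : (R' j c : ℕ) < C.card := by
      rw [hCeq] at hcC
      exact (Finset.mem_filter.mp hcC).2
    have hd' : ¬ ((R' j d : ℕ) < C.card) := fun h =>
      hdC (by rw [hCeq]; exact Finset.mem_filter.mpr ⟨Finset.mem_univ _, h⟩)
    omega
  rw [hCeq, htr]

/-- the non-resolute rule outputting all PSC committees is
candidate monotone. -/
theorem psc_rule_candidate_monotone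
    (n m k : ℕ) (hn : 0 < n) (hk : 0 < k) (hkm : k ≤ m)
    (R R' : Profile n m)
    (hR : ∀ i, Function.Bijective (R i))
    (hR' : ∀ i, Function.Bijective (R' i))
    (i : Fin n) (c : Fin m)
    (hshift : ShiftUp R R' i c)
    (W : Finset (Fin m)) (hW : W.card = k)
    (hpsc : SatisfiesPSC k R W) (hc : c ∈ W) :
    ∃ W' : Finset (Fin m), W'.card = k ∧ c ∈ W' ∧ SatisfiesPSC k R' W' := by
  obtain ⟨hoth, d, hcd, h1, h2, h3⟩ := hshift
  have hcCs : c ∈ Finset.univ.filter (fun e => (R' i e : ℕ) < (R i c : ℕ)) := by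
    refine Finset.mem_filter.mpr ⟨Finset.mem_univ _, ?_⟩
    have hv : (R' i c : ℕ) = (R i d : ℕ) := by rw [h1]
    omega
  refine repair hn hk R' _ c hcCs _ W le_rfl hW hc ?_
  intro N' C' ℓ hl1 hl2 hsol hq hviol
  by_cases hsolR : SolidCoalition R N' C'
  · exact absurd ⟨N', C', ℓ, hl1, hl2, hsolR, hq, hviol⟩ hpsc
  · exact violation_set_eq (hR' i) hoth hcd h1 h2 h3 hsol hsolR
end

section
/- For every instance there exists at least one committee satisfying proportionality for solid coalitions (PSC). -/
/-! ### Auxiliary development : an Expanding-Approvals style procedure -/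

/-- Voters who rank candidate `c` among their top `t`. -/
def topSupp {n m : ℕ} (R : Profile n m) (t : ℕ) (c : Fin m) : Finset (Fin n) :=
  Finset.univ.filter (fun i => (R i c : ℕ) < t)

/-- Total remaining weight of supporters of `c` at rank level `t`. -/
def score {n m : ℕ} (R : Profile n m) (w : Fin n → ℕ) (t : ℕ) (c : Fin m) : ℕ :=
  ∑ i ∈ topSupp R t c, w i

/-- One can remove exactly `a` units of weight from the voters in `S`. -/
lemma exists_reduce {n : ℕ} (S : Finset (Fin n)) :
    ∀ (a : ℕ) (w : Fin n → ℕ), a ≤ ∑ i ∈ S, w i →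
      ∃ w' : Fin n → ℕ, (∀ i, w' i ≤ w i) ∧ (∀ i, i ∉ S → w' i = w i) ∧
        (∑ i ∈ S, w' i) + a = ∑ i ∈ S, w i
  | 0, w, _ => ⟨w, fun _ => le_rfl, fun _ _ => rfl, by simp⟩
  | a+1, w, h => by
    obtain ⟨i, hiS, hwi⟩ : ∃ i ∈ S, 0 < w i := by
      by_contra hc
      push_neg at hc
      have hz : ∑ i ∈ S, w i = 0 :=
        Finset.sum_eq_zero (fun i hi => Nat.le_zero.mp (hc i hi))
      omega
    set w1 : Fin n → ℕ := Function.update w i (w i - 1) with hw1def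
    have h1 : w1 i = w i - 1 := Function.update_self _ _ _
    have h2 : ∑ j ∈ S.erase i, w1 j = ∑ j ∈ S.erase i, w j :=
      Finset.sum_congr rfl (fun j hj =>
        Function.update_of_ne (Finset.ne_of_mem_erase hj) _ _)
    have hA := Finset.add_sum_erase S w1 hiS
    have hB := Finset.add_sum_erase S w hiS
    have hsum1 : (∑ j ∈ S, w1 j) + 1 = ∑ j ∈ S, w j := by omega
    obtain ⟨w', hle, hout, hsum⟩ := exists_reduce S a w1 (by omega)
    refine ⟨w', fun j => le_trans (hle j) ?_, fun j hj => ?_, by omega⟩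
    · by_cases hj : j = i
      · subst hj; rw [hw1def, Function.update_self]; omega
      · rw [hw1def, Function.update_of_ne hj]
    · have hji : j ≠ i := fun hji => hj (hji ▸ hiS)
      rw [hout j hj, hw1def, Function.update_of_ne hji]

open scoped Classical in
/-- Elect the chosen candidate and charge its supporters `n` units of weight. -/
noncomputable def elect (n m : ℕ) (R : Profile n m) (t : ℕ)
    (s : Finset (Fin m) × (Fin n → ℕ))
    (h : ∃ c, c ∉ s.1 ∧ n ≤ score R s.2 t c) : Finset (Fin m) × (Fin n → ℕ) :=
  (insert h.choose s.1,
    (exists_reduce (topSupp R t h.choose) n s.2 h.choose_spec.2).choose)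

lemma elect_spec (n m : ℕ) (R : Profile n m) (t : ℕ)
    (s : Finset (Fin m) × (Fin n → ℕ))
    (h : ∃ c, c ∉ s.1 ∧ n ≤ score R s.2 t c) :
    ∃ (c : Fin m) (w' : Fin n → ℕ),
      elect n m R t s h = (insert c s.1, w') ∧ c ∉ s.1 ∧
      (∀ i, w' i ≤ s.2 i) ∧ (∀ i, i ∉ topSupp R t c → w' i = s.2 i) ∧
      (∑ i ∈ topSupp R t c, w' i) + n = ∑ i ∈ topSupp R t c, s.2 i := by
  obtain ⟨h1, h2, h3⟩ :=
    (exists_reduce (topSupp R t h.choose) n s.2 h.choose_spec.2).choose_spec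
  exact ⟨h.choose, _, rfl, h.choose_spec.1, h1, h2, h3⟩

open scoped Classical in
/-- The inner loop at rank level `t` : while some unelected candidate has
score at least `n`, elect it and remove `n` weight from its supporters. -/
noncomputable def loop (n m : ℕ) (R : Profile n m) (t : ℕ) :
    ℕ → Finset (Fin m) × (Fin n → ℕ) → Finset (Fin m) × (Fin n → ℕ)
  | 0, s => s
  | fuel+1, s =>
    if h : ∃ c, c ∉ s.1 ∧ n ≤ score R s.2 t c then
      loop n m R t fuel (elect n m R t s h)
    else s

/-- Total weight of a coalition drops by at most `n` in one election. -/
lemma coal_drop {n : ℕ} (N' : Finset (Fin n)) (w w' : Fin n → ℕ)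
    (hle : ∀ i, w' i ≤ w i) (huniv : (∑ i, w' i) + n = ∑ i, w i) :
    ∑ i ∈ N', w i ≤ (∑ i ∈ N', w' i) + n := by
  have hdiffuniv : (∑ i, w' i) + (∑ i, (w i - w' i)) = ∑ i, w i := by
    rw [← Finset.sum_add_distrib]
    exact Finset.sum_congr rfl (fun i _ => Nat.add_sub_cancel' (hle i))
  have hdiffN : ∑ i ∈ N', (w i - w' i) ≤ ∑ i, (w i - w' i) :=
    Finset.sum_le_sum_of_subset (Finset.subset_univ N')
  have hNsplit : ∑ i ∈ N', w i = ∑ i ∈ N', w' i + ∑ i ∈ N', (w i - w' i) := by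
    rw [← Finset.sum_add_distrib]
    exact Finset.sum_congr rfl (fun i _ => (Nat.add_sub_cancel' (hle i)).symm)
  omega

/-- Total weight over all voters drops by exactly `n` in one election. -/
lemma univ_drop {n m : ℕ} (R : Profile n m) (t : ℕ) (c : Fin m) (w w' : Fin n → ℕ)
    (hout : ∀ i, i ∉ topSupp R t c → w' i = w i)
    (hsum : (∑ i ∈ topSupp R t c, w' i) + n = ∑ i ∈ topSupp R t c, w i) :
    (∑ i, w' i) + n = ∑ i, w i := by
  have hs1 := Finset.sum_add_sum_compl (topSupp R t c) w'
  have hs2 := Finset.sum_add_sum_compl (topSupp R t c) w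
  have hs3 : ∑ i ∈ (topSupp R t c)ᶜ, w' i = ∑ i ∈ (topSupp R t c)ᶜ, w i :=
    Finset.sum_congr rfl (fun i hi => hout i (Finset.mem_compl.mp hi))
  omega

lemma loop_subset (n m : ℕ) (R : Profile n m) (t : ℕ) :
    ∀ fuel s, s.1 ⊆ (loop n m R t fuel s).1 := by
  intro fuel
  induction fuel with
  | zero => intro s; simp [loop]
  | succ fuel ih =>
    intro s
    rw [loop]
    split_ifs with h
    · obtain ⟨c, w', heq, hcW, _⟩ := elect_spec n m R t s h
      rw [heq]
      exact subset_trans (Finset.subset_insert _ _)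
        (ih (insert c s.1, w'))
    · exact subset_rfl

lemma loop_total (n m : ℕ) (R : Profile n m) (t : ℕ) :
    ∀ fuel s, (∑ i, (loop n m R t fuel s).2 i) + n * (loop n m R t fuel s).1.card
      = (∑ i, s.2 i) + n * s.1.card := by
  intro fuel
  induction fuel with
  | zero => intro s; simp [loop]
  | succ fuel ih =>
    intro s
    rw [loop]
    split_ifs with h
    · obtain ⟨c, w', heq, hcW, hle, hout, hsum⟩ := elect_spec n m R t s h
      rw [heq]
      have huniv := univ_drop R t c s.2 w' hout hsum
      have hcard : (insert c s.1).card = s.1.card + 1 :=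
        Finset.card_insert_of_notMem hcW
      have hih := ih (insert c s.1, w')
      simp only at hih
      rw [hcard, Nat.mul_succ] at hih
      omega
    · rfl

lemma loop_done (n m : ℕ) (R : Profile n m) (t : ℕ) :
    ∀ fuel s, m ≤ fuel + s.1.card →
      ∀ c, c ∉ (loop n m R t fuel s).1 → score R (loop n m R t fuel s).2 t c < n := by
  intro fuel
  induction fuel with
  | zero =>
    intro s hms c hcW
    exfalso
    have hle : s.1.card ≤ m := by
      simpa using Finset.card_le_univ s.1
    have huniv : s.1 = Finset.univ :=
      Finset.eq_univ_of_card s.1 (by simpa using le_antisymm hle (by omega))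
    rw [loop] at hcW
    exact hcW (huniv ▸ Finset.mem_univ c)
  | succ fuel ih =>
    intro s hms c hcW
    rw [loop] at hcW ⊢
    split_ifs at hcW ⊢ with h
    · obtain ⟨cc, w', heq, hccW, _⟩ := elect_spec n m R t s h
      rw [heq] at hcW ⊢
      refine ih _ ?_ c hcW
      simp only
      rw [Finset.card_insert_of_notMem hccW]
      omega
    · push_neg at h
      exact h c hcW

lemma loop_coal (n m : ℕ) (R : Profile n m) (t : ℕ)
    (N' : Finset (Fin n)) (C' : Finset (Fin m))
    (Hmem : ∀ c : Fin m, ∀ i ∈ N', (R i c : ℕ) < t → c ∈ C') :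
    ∀ fuel s,
      (∑ i ∈ N', s.2 i) + n * ((s.1 ∩ C').card) ≤
      (∑ i ∈ N', (loop n m R t fuel s).2 i) + n * (((loop n m R t fuel s).1 ∩ C').card) := by
  intro fuel
  induction fuel with
  | zero => intro s; simp [loop]
  | succ fuel ih =>
    intro s
    rw [loop]
    split_ifs with h
    · obtain ⟨c, w', heq, hcW, hle, hout, hsum⟩ := elect_spec n m R t s h
      rw [heq]
      refine le_trans ?_ (ih (insert c s.1, w'))
      simp only
      by_cases hcC : c ∈ C'
      · -- the elected candidate is in C' : the coalition pays at most n
        have hcard : ((insert c s.1) ∩ C').card = (s.1 ∩ C').card + 1 := by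
          rw [Finset.insert_inter_of_mem hcC]
          exact Finset.card_insert_of_notMem
            (fun hx => hcW (Finset.mem_inter.mp hx).1)
        have huniv := univ_drop R t c s.2 w' hout hsum
        have hdrop := coal_drop N' s.2 w' hle huniv
        rw [hcard, Nat.mul_succ]
        omega
      · -- the elected candidate is outside C' : the coalition pays nothing
        have hcard : (insert c s.1) ∩ C' = s.1 ∩ C' := Finset.insert_inter_of_notMem hcC
        have hNeq : ∑ i ∈ N', w' i = ∑ i ∈ N', s.2 i := by
          refine Finset.sum_congr rfl (fun i hi => hout i ?_)
          intro hmem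
          rw [topSupp, Finset.mem_filter] at hmem
          exact hcC (Hmem c i hi hmem.2)
        rw [hcard, hNeq]
    · exact le_rfl

/-- State after processing rank levels `1, …, t` ; each level gets `m` fuel. -/
noncomputable def stages (n m k : ℕ) (R : Profile n m) : ℕ → Finset (Fin m) × (Fin n → ℕ)
  | 0 => (∅, fun _ => k)
  | t+1 => loop n m R (t+1) m (stages n m k R t)

lemma stages_mono (n m k : ℕ) (R : Profile n m) {t t' : ℕ} (h : t ≤ t') :
    (stages n m k R t).1 ⊆ (stages n m k R t').1 := by
  induction h with
  | refl => exact subset_rfl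
  | step h ih => exact subset_trans ih (loop_subset n m R _ m _)

lemma stages_total (n m k : ℕ) (R : Profile n m) :
    ∀ t, (∑ i, (stages n m k R t).2 i) + n * (stages n m k R t).1.card = n * k := by
  intro t
  induction t with
  | zero => simp [stages, Finset.sum_const, Finset.card_univ, mul_comm]
  | succ t ih => rw [stages, loop_total]; exact ih

/-- At the end of stage `t`, no unelected candidate still has score `≥ n`. -/
lemma stages_done (n m k : ℕ) (R : Profile n m) (t : ℕ) :
    ∀ c, c ∉ (stages n m k R (t+1)).1 →
      score R (stages n m k R (t+1)).2 (t+1) c < n := by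
  intro c hc
  exact loop_done n m R (t+1) m (stages n m k R t) (Nat.le_add_right m _) c hc

/-- Any candidate ranked within the top `|C'|` by a coalition member is in `C'`. -/
lemma rank_mem {n m : ℕ} {R : Profile n m} {N' : Finset (Fin n)} {C' : Finset (Fin m)}
    (hsc : SolidCoalition R N' C') (hR : ∀ i, Function.Bijective (R i))
    {i : Fin n} (hi : i ∈ N') (c : Fin m) :
    c ∈ C' ↔ (R i c : ℕ) < C'.card := by
  classical
  set B : Finset ℕ := (C'.image (R i)).image Fin.val with hB
  have hcard : B.card = C'.card := by
    rw [hB, Finset.card_image_of_injective _ Fin.val_injective,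
        Finset.card_image_of_injective _ (hR i).1]
  have hmemB : ∀ c' : Fin m, (R i c' : ℕ) ∈ B ↔ c' ∈ C' := by
    intro c'
    constructor
    · intro hb
      simp only [hB, Finset.mem_image] at hb
      obtain ⟨x, hx, hxv⟩ := hb
      obtain ⟨c0, hc0, rfl⟩ := hx
      have hx2 : R i c0 = R i c' := Fin.val_injective hxv
      rwa [← (hR i).1 hx2]
    · intro hc'
      simp only [hB, Finset.mem_image]
      exact ⟨R i c', ⟨c', hc', rfl⟩, rfl⟩
  have hdc : ∀ b ∈ B, ∀ y, y < b → y ∈ B := by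
    intro b hb y hy
    simp only [hB, Finset.mem_image] at hb
    obtain ⟨x, hx, rfl⟩ := hb
    obtain ⟨c0, hc0, rfl⟩ := hx
    have hym : y < m := lt_trans hy (R i c0).isLt
    obtain ⟨c1, hc1⟩ := (hR i).2 ⟨y, hym⟩
    have hc1C : c1 ∈ C' := by
      by_contra hc1n
      have hlt := hsc i hi c0 hc0 c1 hc1n
      rw [hc1] at hlt
      have : (R i c0 : ℕ) < y := by simpa using hlt
      omega
    have hval : (R i c1 : ℕ) = y := by rw [hc1]
    rw [← hval]
    exact (hmemB c1).mpr hc1C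
  have hrange : B = Finset.range C'.card := by
    rw [← hcard]
    have hsub : B ⊆ Finset.range B.card := by
      intro b hb
      rw [Finset.mem_range]
      by_contra hbc
      push_neg at hbc
      have hss : Finset.range (b+1) ⊆ B := by
        intro y hy
        rw [Finset.mem_range] at hy
        rcases eq_or_lt_of_le (Nat.lt_succ_iff.mp hy) with rfl | hlt
        · exact hb
        · exact hdc b hb y hlt
      have := Finset.card_le_card hss
      rw [Finset.card_range] at this
      omega
    exact Finset.eq_of_subset_of_card_le hsub (by rw [Finset.card_range])
  rw [← hmemB c, hrange, Finset.mem_range]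

/-- every instance admits a committee satisfying PSC. -/
theorem psc_committee_exists
    (n m k : ℕ) (hn : 0 < n) (hk : 0 < k) (hkm : k ≤ m)
    (R : Profile n m) (hR : ∀ i, Function.Bijective (R i)) :
    ∃ W : Finset (Fin m), W.card = k ∧ SatisfiesPSC k R W := by
  classical
  -- the committee produced by the procedure, padded up to size k
  have hWm : (stages n m k R m).1.card ≤ k := by
    have := stages_total n m k R m
    have hmul : n * (stages n m k R m).1.card ≤ n * k := by omega
    exact Nat.le_of_mul_le_mul_left hmul hn
  obtain ⟨W, hWsub, hWcard⟩ :=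
    Finset.exists_superset_card_eq (s := (stages n m k R m).1) (n := k) hWm
      (by simpa using hkm)
  refine ⟨W, hWcard, ?_⟩
  rintro ⟨N', C', ℓ, hl1, hlk, hsc, hq, hlt⟩
  have hmin := lt_min_iff.mp hlt
  -- basic bounds
  have htm : C'.card ≤ m := by simpa using Finset.card_le_univ C'
  have ht1 : 1 ≤ C'.card := lt_of_le_of_lt (Nat.zero_le _) hmin.1
  -- the quota inequality, in ℕ
  have hql : ℓ * n ≤ k * N'.card := by
    have hk' : (0:ℚ) < (k:ℚ) := by exact_mod_cast hk
    rw [div_le_iff₀ hk'] at hq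
    have hcast : ((ℓ * n : ℕ) : ℚ) ≤ ((k * N'.card : ℕ) : ℚ) := by push_cast; linarith
    exact_mod_cast hcast
  set t := C'.card with htdef
  have hsubW : (stages n m k R t).1 ⊆ W :=
    subset_trans (stages_mono n m k R htm) hWsub
  have hr : ((stages n m k R t).1 ∩ C').card ≤ (W ∩ C').card :=
    Finset.card_le_card (Finset.inter_subset_inter hsubW subset_rfl)
  -- the coalition invariant at stage t
  have hcoal : k * N'.card ≤
      (∑ i ∈ N', (stages n m k R t).2 i) + n * (((stages n m k R t).1 ∩ C').card) := by
    clear hr hsubW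
    have : ∀ t', t' ≤ C'.card → k * N'.card ≤
        (∑ i ∈ N', (stages n m k R t').2 i) + n * (((stages n m k R t').1 ∩ C').card) := by
      intro t'
      induction t' with
      | zero =>
        intro _
        simp [stages, Finset.sum_const, mul_comm]
      | succ t' ih =>
        intro hle
        refine le_trans (ih (by omega)) ?_
        rw [stages]
        exact loop_coal n m R (t'+1) N' C'
          (fun c i hi hrank => (rank_mem hsc hR hi c).mpr (by omega)) m _
    exact this t le_rfl
  -- the coalition still holds ≥ n weight at the end of stage t
  have hrℓ : ((stages n m k R t).1 ∩ C').card + 1 ≤ ℓ := by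
    have := hmin.2
    omega
  have hSn : n ≤ ∑ i ∈ N', (stages n m k R t).2 i := by
    have h1 : n * (((stages n m k R t).1 ∩ C').card + 1) ≤ n * ℓ :=
      Nat.mul_le_mul_left n hrℓ
    have h2 : n * ℓ ≤ k * N'.card := by rw [mul_comm]; exact hql
    rw [Nat.mul_succ] at h1
    omega
  -- an unelected candidate of C'
  obtain ⟨c, hcC, hcW⟩ : ∃ c ∈ C', c ∉ W := by
    by_contra hno
    push_neg at hno
    have hsub : C' ⊆ W ∩ C' := fun x hx => Finset.mem_inter.mpr ⟨hno x hx, hx⟩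
    have := Finset.card_le_card hsub
    have := hmin.1
    omega
  have hcWt : c ∉ (stages n m k R t).1 := fun hx => hcW (hsubW hx)
  -- all of N' supports c at level t
  have hNsub : N' ⊆ topSupp R t c := by
    intro i hi
    rw [topSupp, Finset.mem_filter]
    exact ⟨Finset.mem_univ i, (rank_mem hsc hR hi c).mp hcC⟩
  have hscore : n ≤ score R (stages n m k R t).2 t c :=
    le_trans hSn (Finset.sum_le_sum_of_subset hNsub)
  -- contradiction with loop termination at stage t
  obtain ⟨t0, ht0⟩ : ∃ t0, t = t0 + 1 := ⟨t - 1, by omega⟩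
  rw [ht0] at hscore hcWt
  exact absurd hscore (not_le.mpr (stages_done n m k R t0 c hcWt))
end

section
/- Dependent rounding preserves marginals and degrees (statement of Gandhi–Khuller–Parthasarathy–Srinivasan for the bipartite case): for every bipartite graph G = (V, E) with edge weights w_e ∈ [0,1], there exists a probability distribution over subsets F ⊆ E such that (i) for every edge e, Pr[e ∈ F] = w_e, and (ii) for every vertex v and every F in the support, the degree of v in F is either ⌊Σ_{e ∋ v} w_e⌋ or ⌈Σ_{e ∋ v} w_e⌉. -/
/-!
The weight vector lies in the polytope `P` of vectors `x ∈ [0,1]^E` whose degree at every vertex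
lies between the floor and the ceiling of the fractional degree of `w` there. `P` is compact and
convex, hence (Krein–Milman) the convex hull of its extreme points, and the coefficients of `w` in
such a convex combination form the required distribution once every extreme point is a `0/1`
vector. Suppose an extreme point `x` has a nonempty set `S` of fractional edges, and call a vertex
tight if its `x`-degree is an integer. A tight vertex meeting `S` meets it at least twice, so
counting edges shows there are at most `|S|` such vertices, and fewer unless every edge of `S` has
both ends tight; in that case bipartiteness makes the degree equations of the two sides sum to the
same functional. Either way the system "`χ` is supported on `S` and balanced at every tight
vertex" has rank `< |S|`, hence a solution `χ ≠ 0`, and `x ± tχ ∈ P` for small `t > 0`.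
-/

open Finset Filter Topology Module

theorem exists_ne_zero_forall_dual_apply_eq_zero {K V ι : Type*} [Field K] [AddCommGroup V]
    [Module K V] [FiniteDimensional K V] (r : ι → Dual K V)
    (h : (Set.range r).finrank K < finrank K V) : ∃ v ≠ 0, ∀ i, r i v = 0 := by
  set W := Submodule.span K (Set.range r)
  have hW := Subspace.finrank_add_finrank_dualCoannihilator_eq W
  obtain ⟨v, hv, hv0⟩ := Submodule.exists_mem_ne_zero_of_ne_bot (p := W.dualCoannihilator) <| by
    intro hbot
    rw [hbot, finrank_bot, add_zero] at hW
    exact h.ne hW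
  exact ⟨v, hv0, fun i => (Submodule.mem_dualCoannihilator v).1 hv _ (Submodule.subset_span ⟨i, rfl⟩)⟩

theorem exists_weights_of_mem_convexHull_image {𝕜 κ V : Type*} [Field 𝕜] [LinearOrder 𝕜]
    [IsStrictOrderedRing 𝕜] [Fintype κ] [AddCommGroup V] [Module 𝕜 V] {f : κ → V}
    (hf : Function.Injective f) {T : Set κ} {x : V} (hx : x ∈ convexHull 𝕜 (f '' T)) :
    ∃ μ : κ → 𝕜, (∀ k, 0 ≤ μ k) ∧ ∑ k, μ k = 1 ∧ (∀ k, μ k ≠ 0 → k ∈ T) ∧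
      ∑ k, μ k • f k = x := by
  classical
  have hT : f '' T = ↑(({k | k ∈ T} : Finset κ).image f) := by ext; simp
  rw [hT, Finset.mem_convexHull'] at hx
  obtain ⟨ν, hν₀, hν₁, hνx⟩ := hx
  refine ⟨fun k => if k ∈ T then ν (f k) else 0, fun k => ?_, ?_,
    fun k hk => by_contra fun h => hk (if_neg h), ?_⟩
  · by_cases h : k ∈ T
    · simpa [h] using hν₀ _ (mem_image_of_mem f (by simpa using h))
    · simp [h]
  · rw [← sum_filter, ← hν₁, sum_image hf.injOn]
  · simp_rw [ite_smul, zero_smul]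
    rw [← sum_filter, ← hνx, sum_image hf.injOn]

open Classical in
theorem card_filter_notMem_range_intCast_ne_one {ι : Type*} (s : Finset ι) (f : ι → ℝ)
    (h : ∑ i ∈ s, f i ∈ Set.range ((↑) : ℤ → ℝ)) :
    #{i ∈ s | f i ∉ Set.range ((↑) : ℤ → ℝ)} ≠ 1 := by
  simp only [Set.mem_range, ← Subring.mem_bot] at h ⊢
  intro h1
  obtain ⟨i, hi⟩ := card_eq_one.1 h1
  obtain ⟨his, hfi⟩ := mem_filter.1 (hi ▸ mem_singleton_self i)
  have hrest : ∑ j ∈ s.erase i, f j ∈ (⊥ : Subring ℝ) := Subring.sum_mem _ fun j hj => by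
    by_contra hfj
    have hj' : j ∈ ({i} : Finset ι) := hi ▸ mem_filter.2 ⟨mem_of_mem_erase hj, hfj⟩
    exact ne_of_mem_erase hj (mem_singleton.1 hj')
  apply hfi
  simpa [← add_sum_erase s f his] using sub_mem h hrest

theorem eventually_add_mul_mem_Icc {lo hi y c : ℝ} (hy : y ∈ Set.Icc lo hi)
    (hc : y ∈ Set.Ioo lo hi ∨ c = 0) : ∀ᶠ t in 𝓝 (0 : ℝ), y + t * c ∈ Set.Icc lo hi := by
  rcases hc with hy' | rfl
  · have hcont : Continuous fun t : ℝ => y + t * c := by fun_prop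
    have hlim : Tendsto (fun t : ℝ => y + t * c) (𝓝 0) (𝓝 y) := by simpa using hcont.tendsto 0
    exact (hlim.eventually (Ioo_mem_nhds hy'.1 hy'.2)).mono fun _ h => Set.Ioo_subset_Icc_self h
  · simpa using hy

section

variable {ι α β : Type*} [DecidableEq α] [DecidableEq β]

def weightedDegree (E : Finset ι) (p : ι → α) (a : α) : (ι → ℝ) →ₗ[ℝ] ℝ :=
  ∑ e ∈ E with p e = a, LinearMap.proj e

@[simp]
theorem weightedDegree_apply (E : Finset ι) (p : ι → α) (a : α) (x : ι → ℝ) :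
    weightedDegree E p a x = ∑ e ∈ E with p e = a, x e := by
  simp [weightedDegree]

theorem continuous_weightedDegree (E : Finset ι) (p : ι → α) (a : α) :
    Continuous (weightedDegree E p a) := by
  rw [show ⇑(weightedDegree E p a) = fun x => ∑ e ∈ E with p e = a, x e from
    funext (weightedDegree_apply E p a)]
  fun_prop

theorem weightedDegree_indicator_self (E : Finset ι) (p : ι → α) (a : α) (w : ι → ℝ) :
    weightedDegree E p a ((E : Set ι).indicator w) = weightedDegree E p a w := by
  simp only [weightedDegree_apply]
  exact sum_congr rfl fun e he => Set.indicator_of_mem (mem_filter.1 he).1 w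

theorem weightedDegree_eq_of_subset {S E : Finset ι} (hSE : S ⊆ E) {χ : ι → ℝ}
    (hχ : ∀ e ∉ S, χ e = 0) (p : ι → α) (a : α) :
    weightedDegree E p a χ = weightedDegree S p a χ := by
  simp only [weightedDegree_apply]
  refine (sum_subset (filter_subset_filter _ hSE) fun e he heS => hχ e fun heS' => ?_).symm
  exact heS (mem_filter.2 ⟨heS', (mem_filter.1 he).2⟩)

theorem weightedDegree_eq_zero_of_balanced {S E : Finset ι} (hSE : S ⊆ E) {χ : ι → ℝ}
    (hχ : ∀ e ∉ S, χ e = 0) {p : ι → α} {T : α → Prop} [DecidablePred T]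
    (hbal : ∀ a ∈ {a ∈ S.image p | T a}, weightedDegree S p a χ = 0) {a : α} (ha : T a) :
    weightedDegree E p a χ = 0 := by
  rw [weightedDegree_eq_of_subset hSE hχ]
  by_cases has : a ∈ S.image p
  · exact hbal a (mem_filter.2 ⟨has, ha⟩)
  · refine (weightedDegree_apply S p a χ).trans (sum_eq_zero fun e he => ?_)
    obtain ⟨heS, rfl⟩ := mem_filter.1 he
    exact absurd (mem_image_of_mem p heS) has

theorem sum_weightedDegree_of_mapsTo {S : Finset ι} {p : ι → α} {A : Finset α}
    (h : ∀ e ∈ S, p e ∈ A) : ∑ a ∈ A, weightedDegree S p a = ∑ e ∈ S, LinearMap.proj e :=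
  sum_fiberwise_of_maps_to h _

theorem two_mul_card_le_card_filter_mem {S : Finset ι} {p : ι → α} {A : Finset α}
    (h : ∀ a ∈ A, 2 ≤ #{e ∈ S | p e = a}) : 2 * #A ≤ #{e ∈ S | p e ∈ A} := by
  rw [← sum_card_fiberwise_eq_card_filter, mul_comm, ← smul_eq_mul, ← sum_const]
  exact sum_le_sum h

theorem card_add_card_le_card {S : Finset ι} {p : ι → α} {q : ι → β} {A : Finset α}
    {B : Finset β} (hA : ∀ a ∈ A, 2 ≤ #{e ∈ S | p e = a}) (hB : ∀ b ∈ B, 2 ≤ #{e ∈ S | q e = b}) :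
    #A + #B ≤ #S := by
  have hcA := (two_mul_card_le_card_filter_mem hA).trans (card_filter_le S _)
  have hcB := (two_mul_card_le_card_filter_mem hB).trans (card_filter_le S _)
  omega

theorem card_add_card_lt_card {S : Finset ι} {p : ι → α} {q : ι → β} {A : Finset α}
    {B : Finset β} (hA : ∀ a ∈ A, 2 ≤ #{e ∈ S | p e = a}) (hB : ∀ b ∈ B, 2 ≤ #{e ∈ S | q e = b})
    (hends : ¬ ∀ e ∈ S, p e ∈ A ∧ q e ∈ B) : #A + #B < #S := by
  have hcA := two_mul_card_le_card_filter_mem hA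
  have hcB := two_mul_card_le_card_filter_mem hB
  have hA' := card_filter_le S (p · ∈ A)
  have hB' := card_filter_le S (q · ∈ B)
  push Not at hends
  obtain ⟨e, he, hend⟩ := hends
  by_cases hpe : p e ∈ A
  · have := card_lt_card ((filter_ssubset (p := (q · ∈ B))).2 ⟨e, he, hend hpe⟩)
    omega
  · have := card_lt_card ((filter_ssubset (p := (p · ∈ A))).2 ⟨e, he, hpe⟩)
    omega

open Classical in
theorem two_le_card_filter_of_mem_range_intCast {E : Finset ι} {x : ι → ℝ} {p : ι → α} {a : α}
    (ha : a ∈ ({e ∈ E | x e ∉ Set.range ((↑) : ℤ → ℝ)} : Finset ι).image p)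
    (hint : weightedDegree E p a x ∈ Set.range ((↑) : ℤ → ℝ)) :
    2 ≤ #{e ∈ {e ∈ E | x e ∉ Set.range ((↑) : ℤ → ℝ)} | p e = a} := by
  obtain ⟨e, he, rfl⟩ := mem_image.1 ha
  have hpos : 0 < #{e' ∈ {e ∈ E | x e ∉ Set.range ((↑) : ℤ → ℝ)} | p e' = p e} :=
    card_pos.2 ⟨e, mem_filter.2 ⟨he, rfl⟩⟩
  have hne := card_filter_notMem_range_intCast_ne_one _ x (by simpa using hint)
  rw [filter_comm] at hne
  omega

theorem exists_ne_zero_weightedDegree_eq_zero [Fintype ι] {p : ι → α} {q : ι → β}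
    {S : Finset ι} (hS : S.Nonempty) {A : Finset α} {B : Finset β}
    (hA : ∀ a ∈ A, 2 ≤ #{e ∈ S | p e = a}) (hB : ∀ b ∈ B, 2 ≤ #{e ∈ S | q e = b}) :
    ∃ χ : ι → ℝ, χ ≠ 0 ∧ (∀ e ∉ S, χ e = 0) ∧ (∀ a ∈ A, weightedDegree S p a χ = 0) ∧
      ∀ b ∈ B, weightedDegree S q b χ = 0 := by
  classical
  let r : {e // e ∉ S} ⊕ (A ⊕ B) → Dual ℝ (ι → ℝ) :=
    Sum.elim (fun e => LinearMap.proj e.1) (Sum.elim (weightedDegree S p ·) (weightedDegree S q ·))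
  suffices hr : (Set.range r).finrank ℝ < Fintype.card ι by
    obtain ⟨χ, hχ, hr0⟩ := exists_ne_zero_forall_dual_apply_eq_zero r (by simpa using hr)
    exact ⟨χ, hχ, fun e he => hr0 (.inl ⟨e, he⟩), fun a ha => hr0 (.inr (.inl ⟨a, ha⟩)),
      fun b hb => hr0 (.inr (.inr ⟨b, hb⟩))⟩
  have hcard : Fintype.card ({e // e ∉ S} ⊕ (A ⊕ B)) = Fintype.card ι - #S + (#A + #B) := by
    simp [Fintype.card_subtype_compl]
  have hrank := finrank_range_le_card (R := ℝ) r
  have hSle : #S ≤ Fintype.card ι := card_le_univ S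
  by_cases hends : ∀ e ∈ S, p e ∈ A ∧ q e ∈ B
  · -- the rows of `A` and those of `B` both sum to `χ ↦ ∑ e ∈ S, χ e`
    have hdep : ¬ LinearIndependent ℝ r := by
      rw [Fintype.not_linearIndependent_iff]
      obtain ⟨e, he⟩ := hS
      refine ⟨Sum.elim 0 (Sum.elim 1 (-1)), ?_, .inr (.inl ⟨p e, (hends e he).1⟩), by simp⟩
      simp [r, Fintype.sum_sum_type, sum_attach A (weightedDegree S p),
        sum_attach B (weightedDegree S q), sum_weightedDegree_of_mapsTo fun e he => (hends e he).1,
        sum_weightedDegree_of_mapsTo fun e he => (hends e he).2]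
    have hne := mt linearIndependent_iff_card_eq_finrank_span.2 hdep
    have hle := card_add_card_le_card hA hB
    omega
  · have hlt := card_add_card_lt_card hA hB hends
    omega

theorem eventually_weightedDegree_add_smul_mem_Icc [Finite α] {E : Finset ι} {p : ι → α}
    {lo hi : α → ℤ} {x χ : ι → ℝ} (hx : ∀ a, weightedDegree E p a x ∈ Set.Icc (lo a : ℝ) (hi a))
    (hχ : ∀ a, weightedDegree E p a x ∈ Set.range ((↑) : ℤ → ℝ) → weightedDegree E p a χ = 0) :
    ∀ᶠ t in 𝓝 (0 : ℝ), ∀ a, weightedDegree E p a (x + t • χ) ∈ Set.Icc (lo a : ℝ) (hi a) := by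
  refine eventually_all.2 fun a => ?_
  simp only [map_add, map_smul, smul_eq_mul]
  refine eventually_add_mul_mem_Icc (hx a) ?_
  by_cases hint : weightedDegree E p a x ∈ Set.range ((↑) : ℤ → ℝ)
  · exact .inr (hχ a hint)
  · exact .inl ⟨(hx a).1.lt_of_ne fun h => hint ⟨_, h⟩, (hx a).2.lt_of_ne fun h => hint ⟨_, h.symm⟩⟩

/-- A bipartite multigraph is encoded by its edge type `ι` and the endpoint maps `p : ι → α`,
`q : ι → β`; the edges carrying weight are those of `E`. -/
def degreePolytope (E : Finset ι) (p : ι → α) (q : ι → β) (lo hi : α → ℤ) (lo' hi' : β → ℤ) :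
    Set (ι → ℝ) :=
  {x | (∀ e ∉ E, x e = 0) ∧ (∀ e, x e ∈ Set.Icc 0 1) ∧
    (∀ a, weightedDegree E p a x ∈ Set.Icc (lo a : ℝ) (hi a)) ∧
    ∀ b, weightedDegree E q b x ∈ Set.Icc (lo' b : ℝ) (hi' b)}

section degreePolytope

variable {E : Finset ι} {p : ι → α} {q : ι → β} {lo hi : α → ℤ} {lo' hi' : β → ℤ}

theorem convex_degreePolytope : Convex ℝ (degreePolytope E p q lo hi lo' hi') := by
  rintro x ⟨hx₀, hx₁, hxp, hxq⟩ y ⟨hy₀, hy₁, hyp, hyq⟩ s t hs ht hst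
  refine ⟨fun e he => by simp [hx₀ e he, hy₀ e he], fun e => ?_, fun a => ?_, fun b => ?_⟩
  · exact convex_Icc 0 1 (hx₁ e) (hy₁ e) hs ht hst
  · rw [map_add, map_smul, map_smul]
    exact convex_Icc _ _ (hxp a) (hyp a) hs ht hst
  · rw [map_add, map_smul, map_smul]
    exact convex_Icc _ _ (hxq b) (hyq b) hs ht hst

theorem isCompact_degreePolytope [Finite ι] : IsCompact (degreePolytope E p q lo hi lo' hi') := by
  refine (isCompact_univ_pi fun _ => isCompact_Icc).of_isClosed_subset ?_ fun x hx e _ => hx.2.1 e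
  simp only [degreePolytope, Set.ofPred_and, Set.ofPred_forall]
  refine .inter ?_ (.inter ?_ (.inter ?_ ?_))
  · exact isClosed_iInter fun e => isClosed_iInter fun _ =>
      isClosed_eq (continuous_apply e) continuous_const
  · exact isClosed_iInter fun e => isClosed_Icc.preimage (continuous_apply e)
  · exact isClosed_iInter fun a => isClosed_Icc.preimage (continuous_weightedDegree E p a)
  · exact isClosed_iInter fun b => isClosed_Icc.preimage (continuous_weightedDegree E q b)

theorem indicator_mem_degreePolytope {w : ι → ℝ} (hw : ∀ e ∈ E, w e ∈ Set.Icc 0 1) :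
    (E : Set ι).indicator w ∈ degreePolytope E p q (fun a => ⌊weightedDegree E p a w⌋)
      (fun a => ⌈weightedDegree E p a w⌉) (fun b => ⌊weightedDegree E q b w⌋)
      (fun b => ⌈weightedDegree E q b w⌉) := by
  refine ⟨fun e he => Set.indicator_of_notMem he w, fun e => ?_, fun a => ?_, fun b => ?_⟩
  · by_cases he : e ∈ E
    · simpa [he] using hw e he
    · simp [he]
  · rw [weightedDegree_indicator_self]
    exact ⟨Int.floor_le _, Int.le_ceil _⟩
  · rw [weightedDegree_indicator_self]
    exact ⟨Int.floor_le _, Int.le_ceil _⟩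

theorem eventually_add_smul_mem_degreePolytope [Finite ι] [Finite α] [Finite β] {x χ : ι → ℝ}
    (hx : x ∈ degreePolytope E p q lo hi lo' hi') (hχ : ∀ e, χ e ≠ 0 → x e ∈ Set.Ioo 0 1)
    (hp : ∀ a, weightedDegree E p a x ∈ Set.range ((↑) : ℤ → ℝ) → weightedDegree E p a χ = 0)
    (hq : ∀ b, weightedDegree E q b x ∈ Set.range ((↑) : ℤ → ℝ) → weightedDegree E q b χ = 0) :
    ∀ᶠ t in 𝓝 (0 : ℝ), x + t • χ ∈ degreePolytope E p q lo hi lo' hi' := by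
  obtain ⟨hx₀, hx₁, hxp, hxq⟩ := hx
  have hχE : ∀ e ∉ E, χ e = 0 := fun e he => by
    by_contra h
    simpa [hx₀ e he] using hχ e h
  have hbox : ∀ᶠ t in 𝓝 (0 : ℝ), ∀ e, (x + t • χ) e ∈ Set.Icc 0 1 := by
    refine eventually_all.2 fun e => ?_
    simp only [Pi.add_apply, Pi.smul_apply, smul_eq_mul]
    exact eventually_add_mul_mem_Icc (hx₁ e) ((em (χ e = 0)).symm.imp_left (hχ e))
  filter_upwards [hbox, eventually_weightedDegree_add_smul_mem_Icc hxp hp,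
    eventually_weightedDegree_add_smul_mem_Icc hxq hq] with t ht₁ htp htq
  exact ⟨fun e he => by simp [hx₀ e he, hχE e he], ht₁, htp, htq⟩

theorem eq_zero_or_eq_one_of_mem_extremePoints [Fintype ι] [Finite α] [Finite β] {x : ι → ℝ}
    (hx : x ∈ (degreePolytope E p q lo hi lo' hi').extremePoints ℝ) (e : ι) :
    x e = 0 ∨ x e = 1 := by
  classical
  obtain ⟨hxP, hext⟩ := mem_extremePoints.1 hx
  by_contra hfrac
  let S : Finset ι := {e ∈ E | x e ∉ Set.range ((↑) : ℤ → ℝ)}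
  have hSIoo : ∀ e ∈ S, x e ∈ Set.Ioo 0 1 := fun e he => by
    obtain ⟨h0, h1⟩ := hxP.2.1 e
    have hnot := (mem_filter.1 he).2
    exact ⟨h0.lt_of_ne fun h => hnot ⟨0, by simp [h]⟩, h1.lt_of_ne fun h => hnot ⟨1, by simp [h]⟩⟩
  have heS : e ∈ S := by
    refine mem_filter.2 ⟨by_contra fun he => hfrac (.inl (hxP.1 e he)), ?_⟩
    rintro ⟨n, hn⟩
    obtain ⟨h0, h1⟩ := hxP.2.1 e
    rw [← hn] at h0 h1 hfrac
    norm_cast at h0 h1 hfrac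
    omega
  obtain ⟨χ, hχ0, hχS, hχp, hχq⟩ := exists_ne_zero_weightedDegree_eq_zero ⟨e, heS⟩
    (A := {a ∈ S.image p | weightedDegree E p a x ∈ Set.range ((↑) : ℤ → ℝ)})
    (B := {b ∈ S.image q | weightedDegree E q b x ∈ Set.range ((↑) : ℤ → ℝ)})
    (fun a ha => two_le_card_filter_of_mem_range_intCast (mem_filter.1 ha).1 (mem_filter.1 ha).2)
    (fun b hb => two_le_card_filter_of_mem_range_intCast (mem_filter.1 hb).1 (mem_filter.1 hb).2)
  have hev := eventually_add_smul_mem_degreePolytope hxP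
    (fun e he => hSIoo e (by_contra fun h => he (hχS e h)))
    (fun a ha => weightedDegree_eq_zero_of_balanced (filter_subset _ _) hχS hχp ha)
    (fun b hb => weightedDegree_eq_zero_of_balanced (filter_subset _ _) hχS hχq hb)
  obtain ⟨t, ht, htP, htP'⟩ :=
    (hev.and ((continuous_neg.tendsto' 0 0 neg_zero).eventually hev)).exists_gt
  have hseg : x ∈ openSegment ℝ (x + t • χ) (x + (-t) • χ) :=
    ⟨1 / 2, 1 / 2, by norm_num, by norm_num, by norm_num, by ext; simp; ring⟩
  have hxt := (hext _ htP _ htP' hseg).1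
  exact hχ0 (by simpa [ht.ne'] using hxt)

theorem degreePolytope_subset_convexHull [Fintype ι] [Finite α] [Finite β] :
    degreePolytope E p q lo hi lo' hi' ⊆ convexHull ℝ ((fun F : Finset ι => (F : Set ι).indicator 1) ''
      {F | (F : Set ι).indicator 1 ∈ degreePolytope E p q lo hi lo' hi'}) := by
  classical
  set P := degreePolytope E p q lo hi lo' hi'
  have hext : P.extremePoints ℝ ⊆
      (fun F : Finset ι => (F : Set ι).indicator 1) '' {F | (F : Set ι).indicator 1 ∈ P} := by
    intro x hx
    have hxF : (({e | x e = 1} : Finset ι) : Set ι).indicator 1 = x := by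
      ext e
      rcases eq_zero_or_eq_one_of_mem_extremePoints hx e with h | h <;> simp [h]
    exact ⟨({e | x e = 1} : Finset ι), by rw [Set.mem_ofPred_eq, hxF]; exact hx.1, hxF⟩
  have hfin : (P.extremePoints ℝ).Finite := ((Set.toFinite _).image _).subset hext
  calc P = closure (convexHull ℝ (P.extremePoints ℝ)) :=
        (closure_convexHull_extremePoints isCompact_degreePolytope convex_degreePolytope).symm
    _ = convexHull ℝ (P.extremePoints ℝ) := (hfin.isClosed_convexHull ℝ).closure_eq
    _ ⊆ _ := convexHull_mono hext

theorem subset_of_indicator_mem_degreePolytope {F : Finset ι}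
    (h : (F : Set ι).indicator 1 ∈ degreePolytope E p q lo hi lo' hi') : F ⊆ E := fun e heF =>
  by_contra fun heE => by simpa [heF] using h.1 e heE

end degreePolytope

theorem card_filter_eq_floor_or_eq_ceil {E F : Finset ι} (hF : F ⊆ E) {p : ι → α} {a : α} {d : ℝ}
    (h : weightedDegree E p a ((F : Set ι).indicator 1) ∈ Set.Icc (⌊d⌋ : ℝ) ⌈d⌉) :
    (#{e ∈ F | p e = a} : ℤ) = ⌊d⌋ ∨ (#{e ∈ F | p e = a} : ℤ) = ⌈d⌉ := by
  have hdeg : weightedDegree E p a ((F : Set ι).indicator 1) = #{e ∈ F | p e = a} := by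
    classical
    simp [Set.indicator_apply, inter_comm, inter_filter, inter_eq_left.2 hF]
  rw [hdeg] at h
  obtain ⟨h₁, h₂⟩ := h
  have h₁' : ⌊d⌋ ≤ (#{e ∈ F | p e = a} : ℤ) := by exact_mod_cast h₁
  have h₂' : (#{e ∈ F | p e = a} : ℤ) ≤ ⌈d⌉ := by exact_mod_cast h₂
  have := Int.ceil_le_floor_add_one d
  omega

end

/-- Gandhi–Khuller–Parthasarathy–Srinivasan dependent rounding,
bipartite case: edge weights in [0,1] can be rounded by a lottery over edge
subsets preserving all marginals, with every vertex degree ex post equal to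
the floor or the ceiling of its fractional degree. -/
theorem dependent_rounding_bipartite
    (L Rv : Type*) [Fintype L] [Fintype Rv] [DecidableEq L] [DecidableEq Rv]
    (E : Finset (L × Rv)) (w : L × Rv → ℝ)
    (hw : ∀ e ∈ E, 0 ≤ w e ∧ w e ≤ 1) :
    ∃ μ : Finset (L × Rv) → ℝ,
      (∀ F, 0 ≤ μ F) ∧
      (∑ F : Finset (L × Rv), μ F = 1) ∧
      (∀ F, μ F ≠ 0 → F ⊆ E) ∧
      (∀ e ∈ E, ∑ F ∈ Finset.univ.filter (fun F : Finset (L × Rv) => e ∈ F), μ F = w e) ∧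
      (∀ F, μ F ≠ 0 →
        (∀ v : L,
          ((F.filter (fun e => e.1 = v)).card : ℤ) = ⌊∑ e ∈ E.filter (fun e => e.1 = v), w e⌋ ∨
          ((F.filter (fun e => e.1 = v)).card : ℤ) = ⌈∑ e ∈ E.filter (fun e => e.1 = v), w e⌉) ∧
        (∀ u : Rv,
          ((F.filter (fun e => e.2 = u)).card : ℤ) = ⌊∑ e ∈ E.filter (fun e => e.2 = u), w e⌋ ∨
          ((F.filter (fun e => e.2 = u)).card : ℤ) = ⌈∑ e ∈ E.filter (fun e => e.2 = u), w e⌉)) := by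
  obtain ⟨μ, hμ₀, hμ₁, hμP, hμw⟩ := exists_weights_of_mem_convexHull_image
    (fun F G h => coe_inj.1 (Set.indicator_one_inj ℝ h))
    (degreePolytope_subset_convexHull (indicator_mem_degreePolytope (p := Prod.fst)
      (q := Prod.snd) hw))
  have hμE : ∀ F, μ F ≠ 0 → F ⊆ E := fun F hF => subset_of_indicator_mem_degreePolytope (hμP F hF)
  refine ⟨μ, hμ₀, hμ₁, hμE, fun e he => ?_, fun F hF => ⟨fun v => ?_, fun u => ?_⟩⟩
  · have := congrFun hμw e
    simp only [Finset.sum_apply, Pi.smul_apply, smul_eq_mul, Set.indicator_apply, mem_coe,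
      Pi.one_apply, mul_ite, mul_one, mul_zero, if_pos he] at this
    rwa [sum_filter]
  · simpa using card_filter_eq_floor_or_eq_ceil (hμE F hF) ((hμP F hF).2.2.1 v)
  · simpa using card_filter_eq_floor_or_eq_ceil (hμE F hF) ((hμP F hF).2.2.2 u)
end
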